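/- arXiv:2602.04303 — 4 statements merged into one kernel-verified Lean document; each statement's English description precedes it below -/
import Mathlib

section
/- For all real numbers α with 0 < α ≤ 1 (here β in (0,1]) and 0 < y < x, if a < 0 then |y^a - x^a| / (x - y)^β ≤ C · y^(a-β), and if a ≥ 0 then |y^a - x^a| / (x - y)^β ≤ C · x^(a-β), for some constant C depending only on a and β. -/
/-!
When `x - y` is small compared with the relevant endpoint (`y` for `a < 0`, `x` for `a ≥ 0`),
the mean value theorem gives `|y ^ a - x ^ a| = |a| c ^ (a - 1) (x - y)` with `y < c < x`, and
`x - y ≤ z ^ (1 - β) (x - y) ^ β` for any `z ≥ x - y` converts the factor `x - y` into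
`(x - y) ^ β`. Otherwise `|y ^ a - x ^ a|` is bounded by the larger of the two powers, `w ^ a`,
and `w ^ a = w ^ (a - β) w ^ β` with `w` at most twice `x - y`.
-/

open Real Set

theorem exists_abs_rpow_sub_rpow_eq_mul (a : ℝ) {x y : ℝ} (hy : 0 < y) (hyx : y < x) :
    ∃ c ∈ Ioo y x, |y ^ a - x ^ a| = |a| * c ^ (a - 1) * (x - y) := by
  obtain ⟨c, hc, hslope⟩ := exists_hasDerivAt_eq_slope (fun t => t ^ a)
    (fun t => a * t ^ (a - 1)) hyx
    (fun t ht => (continuousAt_rpow_const t a (.inl (hy.trans_le ht.1).ne')).continuousWithinAt)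
    (fun t ht => hasDerivAt_rpow_const (.inl (hy.trans ht.1).ne'))
  have hd : 0 < x - y := sub_pos.2 hyx
  rw [eq_div_iff hd.ne'] at hslope
  refine ⟨c, hc, ?_⟩
  rw [abs_sub_comm, ← hslope, abs_mul, abs_mul,
    abs_of_pos (rpow_pos_of_pos (hy.trans hc.1) _), abs_of_pos hd]

theorem le_rpow_mul_rpow_of_le {d z β : ℝ} (hd : 0 ≤ d) (hdz : d ≤ z) (hβ1 : β ≤ 1) :
    d ≤ z ^ (1 - β) * d ^ β :=
  calc d = d ^ (1 - β) * d ^ β := by rw [← rpow_add' hd (by norm_num), sub_add_cancel, rpow_one]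
    _ ≤ z ^ (1 - β) * d ^ β := by gcongr

theorem rpow_le_two_mul_rpow {b c x : ℝ} (hb : -1 ≤ b) (hc : 0 < c) (hcx : c ≤ x)
    (hxc : x ≤ 2 * c) : c ^ b ≤ 2 * x ^ b := by
  rcases le_or_gt 0 b with hb0 | hb0
  · calc c ^ b ≤ x ^ b := rpow_le_rpow hc.le hcx hb0
      _ ≤ 2 * x ^ b := by linarith [rpow_nonneg (hc.le.trans hcx) b]
  · have h2 : 1 ≤ 2 * (2 : ℝ) ^ b := by
      calc (1 : ℝ) ≤ 2 ^ (1 + b) := one_le_rpow (by norm_num) (by linarith)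
        _ = 2 * 2 ^ b := by rw [rpow_add two_pos, rpow_one]
    calc c ^ b ≤ 2 * 2 ^ b * c ^ b := le_mul_of_one_le_left (rpow_nonneg hc.le b) h2
      _ = 2 * (2 * c) ^ b := by rw [mul_rpow zero_le_two hc.le, mul_assoc]
      _ ≤ 2 * x ^ b := by gcongr 1; exact rpow_le_rpow_of_nonpos (hc.trans_le hcx) hxc hb0.le

theorem abs_rpow_sub_rpow_le_of_rpow_sub_one_le {a β x y z K : ℝ} (hβ1 : β ≤ 1) (hy : 0 < y)
    (hyx : y < x) (hz : x - y ≤ z) (hK : ∀ c ∈ Ioo y x, c ^ (a - 1) ≤ K * z ^ (a - 1)) :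
    |y ^ a - x ^ a| ≤ K * |a| * z ^ (a - β) * (x - y) ^ β := by
  obtain ⟨c, hc, heq⟩ := exists_abs_rpow_sub_rpow_eq_mul a hy hyx
  have hd : 0 < x - y := sub_pos.2 hyx
  have hz0 : 0 < z := hd.trans_le hz
  calc |y ^ a - x ^ a| = |a| * c ^ (a - 1) * (x - y) := heq
    _ ≤ |a| * (K * z ^ (a - 1)) * (x - y) := by gcongr; exact hK c hc
    _ ≤ |a| * (K * z ^ (a - 1)) * (z ^ (1 - β) * (x - y) ^ β) := by
      have hKz : 0 ≤ K * z ^ (a - 1) := (rpow_nonneg (hy.trans hc.1).le _).trans (hK c hc)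
      gcongr
      exact le_rpow_mul_rpow_of_le hd.le hz hβ1
    _ = K * |a| * z ^ (a - β) * (x - y) ^ β := by
      rw [show a - β = (a - 1) + (1 - β) by ring, rpow_add hz0]; ring

theorem rpow_le_mul_rpow_sub_mul_rpow {a β w d K : ℝ} (hw : 0 < w) (hβ0 : 0 ≤ β) (hβ1 : β ≤ 1)
    (hK : 1 ≤ K) (hwd : w ≤ K * d) : w ^ a ≤ K * w ^ (a - β) * d ^ β := by
  have hd : 0 ≤ d := nonneg_of_mul_nonneg_right (hw.le.trans hwd) (by linarith)
  calc w ^ a = w ^ (a - β) * w ^ β := by rw [← rpow_add hw, sub_add_cancel]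
    _ ≤ w ^ (a - β) * (K * d) ^ β := by gcongr
    _ = w ^ (a - β) * K ^ β * d ^ β := by rw [mul_rpow (by linarith) hd, mul_assoc]
    _ ≤ w ^ (a - β) * K * d ^ β := by gcongr; exact rpow_le_self_of_one_le hK hβ1
    _ = K * w ^ (a - β) * d ^ β := by ring

theorem stmt_0 (a β : ℝ) (hβ0 : 0 < β) (hβ1 : β ≤ 1) :
    ∃ C : ℝ, 0 < C ∧ ∀ x y : ℝ, 0 < y → y < x →
      ((a < 0 → |y ^ a - x ^ a| / (x - y) ^ β ≤ C * y ^ (a - β)) ∧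
       (0 ≤ a → |y ^ a - x ^ a| / (x - y) ^ β ≤ C * x ^ (a - β))) := by
  refine ⟨2 * (|a| + 1), by positivity, fun x y hy hyx => ?_⟩
  have hx : 0 < x := hy.trans hyx
  have hd : 0 < x - y := sub_pos.2 hyx
  have hdiv : ∀ {M z : ℝ}, 0 < z → M ≤ 2 * (|a| + 1) →
      |y ^ a - x ^ a| ≤ M * z ^ (a - β) * (x - y) ^ β →
      |y ^ a - x ^ a| / (x - y) ^ β ≤ 2 * (|a| + 1) * z ^ (a - β) := fun hz hM h => by
    rw [div_le_iff₀ (rpow_pos_of_pos hd β)]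
    exact h.trans (by gcongr)
  have ha_abs : 0 ≤ |a| := abs_nonneg a
  constructor
  · intro ha
    rcases le_or_gt (x - y) y with hnear | hfar
    · refine hdiv hy (M := 1 * |a|) (by linarith) ?_
      refine abs_rpow_sub_rpow_le_of_rpow_sub_one_le hβ1 hy hyx hnear fun c hc => ?_
      rw [one_mul]
      exact rpow_le_rpow_of_nonpos hy hc.1.le (by linarith)
    · refine hdiv hy (M := 1) (by linarith) ?_
      have hxy : x ^ a ≤ y ^ a := rpow_le_rpow_of_nonpos hy hyx.le ha.le
      refine (abs_sub_le_of_nonneg_of_le (rpow_nonneg hy.le a) le_rfl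
        (rpow_nonneg hx.le a) hxy).trans ?_
      exact rpow_le_mul_rpow_sub_mul_rpow hy hβ0.le hβ1 le_rfl (by linarith)
  · intro ha
    rcases le_or_gt x (2 * y) with hnear | hfar
    · refine hdiv hx (M := 2 * |a|) (by linarith) ?_
      refine abs_rpow_sub_rpow_le_of_rpow_sub_one_le hβ1 hy hyx (by linarith) fun c hc => ?_
      exact rpow_le_two_mul_rpow (by linarith) (hy.trans hc.1) hc.2.le (by linarith [hc.1])
    · refine hdiv hx (M := 2) (by linarith) ?_
      have hyx' : y ^ a ≤ x ^ a := rpow_le_rpow hy.le hyx.le ha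
      refine (abs_sub_le_of_nonneg_of_le (rpow_nonneg hy.le a) hyx'
        (rpow_nonneg hx.le a) le_rfl).trans ?_
      exact rpow_le_mul_rpow_sub_mul_rpow hx hβ0.le hβ1 one_le_two (by linarith)
end

section
/- Let 0 < s < t, β > 0, 0 < γ ≤ min(β, 1), and γ < α + 1 with α < 0. Then ∫_s^t r^(-β) (t - r)^α dr ≤ C · s^(γ-β) · (t - s)^(α+1-γ), where C depends only on α, β, γ. -/
/-!
Split `[s, t]` at the midpoint `m`. Writing `r ^ (-β) = r ^ (γ - β) * r ^ (-γ)` with `γ ≤ β`, the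
factor `r ^ (γ - β)` is at most `s ^ (γ - β)` on all of `[s, t]`. On `[s, m]` bound `r ^ (-γ)` by
`(r - s) ^ (-γ)`, integrable because `γ < 1`, and `(t - r) ^ α` by `(t - m) ^ α` since `α ≤ 0`; on
`[m, t]` bound `r ^ (-γ)` by `(m - s) ^ (-γ)` and integrate `(t - r) ^ α` exactly, using `-1 < α`.
Both pieces are `s ^ (γ - β)` times a multiple of `((t - s) / 2) ^ (α + 1 - γ)`.
-/

open Real intervalIntegral MeasureTheory Set

section PowerOfDistance

variable {a b p : ℝ}

lemma intervalIntegrable_rpow_sub_left (hp : -1 < p) :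
    IntervalIntegrable (fun x => (x - a) ^ p) volume a b := by
  simpa using (intervalIntegrable_rpow' (a := 0) (b := b - a) hp).comp_sub_right a

lemma intervalIntegrable_rpow_right_sub (hp : -1 < p) :
    IntervalIntegrable (fun x => (b - x) ^ p) volume a b := by
  simpa using (intervalIntegrable_rpow' (a := b - a) (b := 0) hp).comp_sub_left b

lemma integral_rpow_sub_left (hp : -1 < p) :
    ∫ x in a..b, (x - a) ^ p = (b - a) ^ (p + 1) / (p + 1) := by
  rw [integral_comp_sub_right (fun x => x ^ p), sub_self, integral_rpow (Or.inl hp),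
    zero_rpow (by linarith), sub_zero]

lemma integral_rpow_right_sub (hp : -1 < p) :
    ∫ x in a..b, (b - x) ^ p = (b - a) ^ (p + 1) / (p + 1) := by
  rw [integral_comp_sub_left (fun x => x ^ p), sub_self, integral_rpow (Or.inl hp),
    zero_rpow (by linarith), sub_zero]

end PowerOfDistance

lemma rpow_neg_le_mul_rpow_neg {s r u β γ : ℝ} (hs : 0 < s) (hsr : s ≤ r) (hu : 0 < u)
    (hur : u ≤ r) (hγ : 0 ≤ γ) (hγβ : γ ≤ β) : r ^ (-β) ≤ s ^ (γ - β) * u ^ (-γ) := by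
  have hr : 0 < r := hs.trans_le hsr
  calc r ^ (-β) = r ^ (γ - β) * r ^ (-γ) := by rw [← rpow_add hr]; ring_nf
    _ ≤ s ^ (γ - β) * u ^ (-γ) :=
      mul_le_mul (rpow_le_rpow_of_nonpos hs hsr (by linarith))
        (rpow_le_rpow_of_nonpos hu hur (by linarith)) (by positivity) (by positivity)

section Pieces

variable {s m t α β γ : ℝ}

lemma intervalIntegrable_rpow_neg_mul_sub_rpow (hs : 0 < s) (hst : s ≤ t) (hα : -1 < α) :
    IntervalIntegrable (fun r => r ^ (-β) * (t - r) ^ α) volume s t := by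
  refine (intervalIntegrable_rpow_right_sub hα).continuousOn_mul ?_
  rw [uIcc_of_le hst]
  exact continuousOn_id.rpow_const fun r hr => Or.inl (hs.trans_le hr.1).ne'

lemma integral_rpow_neg_mul_sub_rpow_le_left_piece (hs : 0 < s) (hsm : s ≤ m) (hmt : m < t)
    (hα : α ≤ 0) (hγ0 : 0 ≤ γ) (hγ1 : γ < 1) (hγβ : γ ≤ β)
    (hf : IntervalIntegrable (fun r => r ^ (-β) * (t - r) ^ α) volume s m) :
    ∫ r in s..m, r ^ (-β) * (t - r) ^ α ≤
      s ^ (γ - β) * (t - m) ^ α * ((m - s) ^ (1 - γ) / (1 - γ)) := by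
  have hγ : -1 < -γ := by linarith
  calc ∫ r in s..m, r ^ (-β) * (t - r) ^ α
      ≤ ∫ r in s..m, s ^ (γ - β) * (t - m) ^ α * (r - s) ^ (-γ) := by
        refine integral_mono_on_of_le_Ioo hsm hf
          ((intervalIntegrable_rpow_sub_left hγ).const_mul _) fun r hr => ?_
        calc r ^ (-β) * (t - r) ^ α ≤ s ^ (γ - β) * (r - s) ^ (-γ) * (t - m) ^ α :=
              mul_le_mul
                (rpow_neg_le_mul_rpow_neg hs hr.1.le (sub_pos.2 hr.1) (by linarith) hγ0 hγβ)
                (rpow_le_rpow_of_nonpos (by linarith) (by linarith [hr.2]) hα)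
                (rpow_nonneg (by linarith [hr.2]) _)
                (mul_nonneg (by positivity) (rpow_nonneg (sub_pos.2 hr.1).le _))
          _ = s ^ (γ - β) * (t - m) ^ α * (r - s) ^ (-γ) := by ring
    _ = s ^ (γ - β) * (t - m) ^ α * ((m - s) ^ (1 - γ) / (1 - γ)) := by
        rw [intervalIntegral.integral_const_mul, integral_rpow_sub_left hγ, neg_add_eq_sub]

lemma integral_rpow_neg_mul_sub_rpow_le_right_piece (hs : 0 < s) (hsm : s < m) (hmt : m ≤ t)
    (hα : -1 < α) (hγ0 : 0 ≤ γ) (hγβ : γ ≤ β)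
    (hf : IntervalIntegrable (fun r => r ^ (-β) * (t - r) ^ α) volume m t) :
    ∫ r in m..t, r ^ (-β) * (t - r) ^ α ≤
      s ^ (γ - β) * (m - s) ^ (-γ) * ((t - m) ^ (α + 1) / (α + 1)) := by
  calc ∫ r in m..t, r ^ (-β) * (t - r) ^ α
      ≤ ∫ r in m..t, s ^ (γ - β) * (m - s) ^ (-γ) * (t - r) ^ α := by
        refine integral_mono_on_of_le_Ioo hmt hf
          ((intervalIntegrable_rpow_right_sub hα).const_mul _) fun r hr => ?_
        exact mul_le_mul_of_nonneg_right
          (rpow_neg_le_mul_rpow_neg hs (by linarith [hr.1]) (sub_pos.2 hsm) (by linarith [hr.1])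
            hγ0 hγβ)
          (rpow_nonneg (by linarith [hr.2]) _)
    _ = s ^ (γ - β) * (m - s) ^ (-γ) * ((t - m) ^ (α + 1) / (α + 1)) := by
        rw [intervalIntegral.integral_const_mul, integral_rpow_right_sub hα]

theorem integral_rpow_neg_mul_sub_rpow_le (hs : 0 < s) (hst : s < t) (hγ0 : 0 ≤ γ)
    (hγ1 : γ < 1) (hγβ : γ ≤ β) (hα1 : -1 < α) (hα : α ≤ 0) :
    ∫ r in s..t, r ^ (-β) * (t - r) ^ α ≤
      2 ^ (γ - α - 1) * (1 / (1 - γ) + 1 / (α + 1)) * s ^ (γ - β) * (t - s) ^ (α + 1 - γ) := by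
  obtain ⟨m, hms, htm⟩ : ∃ m, m - s = (t - s) / 2 ∧ t - m = (t - s) / 2 :=
    ⟨(s + t) / 2, by ring, by ring⟩
  have hd : 0 < (t - s) / 2 := by linarith
  have hpow : ∀ x y, x + y = α + 1 - γ →
      ((t - s) / 2) ^ x * ((t - s) / 2) ^ y = ((t - s) / 2) ^ (α + 1 - γ) :=
    fun x y h => by rw [← rpow_add hd, h]
  have hf := intervalIntegrable_rpow_neg_mul_sub_rpow (β := β) hs hst.le hα1
  have hm : m ∈ uIcc s t := by rw [uIcc_of_le hst.le]; constructor <;> linarith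
  have hfl := hf.mono_set (uIcc_subset_uIcc_left hm)
  have hfr := hf.mono_set (uIcc_subset_uIcc_right hm)
  have hl := integral_rpow_neg_mul_sub_rpow_le_left_piece hs (by linarith) (by linarith) hα hγ0 hγ1
    hγβ hfl
  have hr := integral_rpow_neg_mul_sub_rpow_le_right_piece hs (by linarith) (by linarith) hα1 hγ0
    hγβ hfr
  rw [hms, htm] at hl hr
  rw [← integral_add_adjacent_intervals hfl hfr]
  calc _ ≤ s ^ (γ - β) * ((t - s) / 2) ^ α * (((t - s) / 2) ^ (1 - γ) / (1 - γ)) +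
        s ^ (γ - β) * ((t - s) / 2) ^ (-γ) * (((t - s) / 2) ^ (α + 1) / (α + 1)) :=
        add_le_add hl hr
    _ = s ^ (γ - β) * (((t - s) / 2) ^ α * ((t - s) / 2) ^ (1 - γ)) / (1 - γ) +
        s ^ (γ - β) * (((t - s) / 2) ^ (-γ) * ((t - s) / 2) ^ (α + 1)) / (α + 1) := by ring
    _ = (1 / (1 - γ) + 1 / (α + 1)) * s ^ (γ - β) * ((t - s) / 2) ^ (α + 1 - γ) := by
        rw [hpow α (1 - γ) (by ring), hpow (-γ) (α + 1) (by ring)]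
        ring
    _ = _ := by
        rw [div_rpow (by linarith) zero_le_two, show γ - α - 1 = -(α + 1 - γ) by ring,
          rpow_neg zero_le_two]
        ring

end Pieces

theorem stmt_1_general (α β γ : ℝ) (hγ0 : 0 < γ) (hγβ : γ ≤ min β 1)
    (hγα : γ < α + 1) (hα : α < 0) :
    ∃ C : ℝ, 0 < C ∧ ∀ s t : ℝ, 0 < s → s < t →
      ∫ r in s..t, r ^ (-β) * (t - r) ^ α ≤
        C * s ^ (γ - β) * (t - s) ^ (α + 1 - γ) := by
  have h1γ : 0 < 1 - γ := by linarith
  have hα1 : 0 < α + 1 := by linarith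
  refine ⟨2 ^ (γ - α - 1) * (1 / (1 - γ) + 1 / (α + 1)), by positivity, fun s t hs hst => ?_⟩
  exact integral_rpow_neg_mul_sub_rpow_le hs hst hγ0.le (by linarith)
    (hγβ.trans (min_le_left _ _)) (by linarith) hα.le

theorem stmt_1 (α β γ : ℝ) (hβ : 0 < β) (hγ0 : 0 < γ) (hγβ : γ ≤ min β 1)
    (hγα : γ < α + 1) (hα : α < 0) :
    ∃ C : ℝ, 0 < C ∧ ∀ s t : ℝ, 0 < s → s < t →
      ∫ r in s..t, r ^ (-β) * (t - r) ^ α ≤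
        C * s ^ (γ - β) * (t - s) ^ (α + 1 - γ) :=
  stmt_1_general α β γ hγ0 hγβ hγα hα
end

section
/- For every m ≥ 1 and positive reals α_1, …, α_m, and s_0 < s_{m+1}, the iterated integral over the simplex {s_0 < s_1 < ⋯ < s_m < s_{m+1}} of ∏_{j=1}^m (s_j - s_{j-1})^{α_j - 1} ds_1 ⋯ ds_m equals (s_{m+1} - s_0)^{∑_j α_j} · (∏_{j=1}^m Γ(α_j)) / Γ(∑_{j=1}^m α_j + 1). -/
/-!
Integrating out the first coordinate `s₁` leaves the same integral over the simplex
`s₁ < s₂ < ⋯ < s_m < b`, which by induction on the dimension equals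
`(b - s₁) ^ A' * ∏_{j ≥ 2} Γ(α_j) / Γ(A' + 1)` with `A' = ∑_{j ≥ 2} α_j`. What remains is the Beta
integral `∫_a^b (s₁ - a) ^ (α₁ - 1) * (b - s₁) ^ A' ds₁ = (b - a) ^ (α₁ + A') * B(α₁, A' + 1)`,
and `Γ(A' + 1)` cancels. The induction starts in dimension `0` and is carried out for the
`ℝ≥0∞`-valued integral, so that Tonelli's theorem applies without integrability side conditions.
-/

open Real MeasureTheory Finset

/-- The previous coordinate: `prevCoord a x j` is `x (j-1)` for `j > 0` and `a` for `j = 0`. -/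
noncomputable def prevCoord {m : ℕ} (a : ℝ) (x : Fin m → ℝ) (j : Fin m) : ℝ :=
  if h : 0 < j.val then x ⟨j.val - 1, lt_of_le_of_lt (Nat.sub_le _ _) j.isLt⟩ else a

open scoped ENNReal

theorem lintegral_Ioo_zero_one_rpow_mul_one_sub_rpow {p q : ℝ} (hp : 0 < p) (hq : 0 < q) :
    ∫⁻ x in Set.Ioo 0 1, ENNReal.ofReal (x ^ (p - 1) * (1 - x) ^ (q - 1)) =
      ENNReal.ofReal (ProbabilityTheory.beta p q) := by
  have hB := ProbabilityTheory.beta_pos hp hq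
  have hdensity := ProbabilityTheory.lintegral_betaPDF_eq_one hp hq
  rw [ProbabilityTheory.lintegral_betaPDF] at hdensity
  calc ∫⁻ x in Set.Ioo 0 1, ENNReal.ofReal (x ^ (p - 1) * (1 - x) ^ (q - 1))
      = ∫⁻ x in Set.Ioo 0 1, ENNReal.ofReal (ProbabilityTheory.beta p q) *
          ENNReal.ofReal (1 / ProbabilityTheory.beta p q * x ^ (p - 1) * (1 - x) ^ (q - 1)) := by
        congr 1 with x
        rw [← ENNReal.ofReal_mul hB.le]
        congr 1
        field_simp
    _ = ENNReal.ofReal (ProbabilityTheory.beta p q) := by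
        rw [lintegral_const_mul' _ _ ENNReal.ofReal_ne_top, hdensity, mul_one]

theorem lintegral_Ioo_sub_rpow_mul_sub_rpow {p q c d : ℝ} (hp : 0 < p) (hq : 0 < q) (hcd : c < d) :
    ∫⁻ t in Set.Ioo c d, ENNReal.ofReal ((t - c) ^ (p - 1) * (d - t) ^ (q - 1)) =
      ENNReal.ofReal ((d - c) ^ (p + q - 1) * ProbabilityTheory.beta p q) := by
  have hL : 0 < d - c := sub_pos.mpr hcd
  have himage : (fun x => (d - c) * x + c) '' Set.Ioo 0 1 = Set.Ioo c d := by
    rw [Set.image_affine_Ioo hL]; congr 1 <;> ring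
  have hinj : Set.InjOn (fun x => (d - c) * x + c) (Set.Ioo 0 1) := fun x _ y _ h => by
    simpa [hL.ne'] using h
  rw [← himage, lintegral_image_eq_lintegral_abs_deriv_mul measurableSet_Ioo
      (fun x _ => (((hasDerivAt_id' x).const_mul (d - c)).add_const c).hasDerivWithinAt) hinj,
    ENNReal.ofReal_mul (rpow_nonneg hL.le _),
    ← lintegral_Ioo_zero_one_rpow_mul_one_sub_rpow hp hq,
    ← lintegral_const_mul' _ _ ENNReal.ofReal_ne_top]
  refine setLIntegral_congr_fun measurableSet_Ioo fun x hx => ?_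
  rw [← ENNReal.ofReal_mul (abs_nonneg _), ← ENNReal.ofReal_mul (rpow_nonneg hL.le _)]
  congr 1
  have h1 : (d - c) * x + c - c = (d - c) * x := by ring
  have h2 : d - ((d - c) * x + c) = (d - c) * (1 - x) := by ring
  have h3 : (d - c) ^ (p + q - 1) = (d - c) * (d - c) ^ (p - 1) * (d - c) ^ (q - 1) := by
    rw [show p + q - 1 = 1 + (p - 1) + (q - 1) by ring, rpow_add hL, rpow_add hL, rpow_one]
  rw [mul_one, abs_of_pos hL, h1, h2, mul_rpow hL.le hx.1.le, mul_rpow hL.le (by linarith [hx.2]),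
    h3]
  ring

theorem lintegral_fin_succ_eq_lintegral_cons {E : Type*} [MeasureSpace E]
    [SigmaFinite (volume : Measure E)] {n : ℕ} {f : (Fin (n + 1) → E) → ℝ≥0∞} (hf : Measurable f) :
    ∫⁻ x, f x = ∫⁻ t, ∫⁻ y, f (Fin.cons t y) := by
  set e := MeasurableEquiv.piFinSuccAbove (fun _ : Fin (n + 1) => E) 0
  rw [← (volume_preserving_piFinSuccAbove _ 0).symm.lintegral_comp_emb e.symm.measurableEmbedding,
    Measure.volume_eq_prod]
  refine (lintegral_prod _ (hf.comp e.symm.measurable).aemeasurable).trans ?_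
  simp only [e, Function.comp_apply, MeasurableEquiv.piFinSuccAbove_symm_apply,
    Fin.insertNthEquiv_zero]
  rfl

section prevCoord

variable {n : ℕ} (a t : ℝ)

@[simp]
theorem prevCoord_zero (x : Fin (n + 1) → ℝ) : prevCoord a x 0 = a := by
  simp [prevCoord]

@[simp]
theorem prevCoord_succ (x : Fin (n + 1) → ℝ) (j : Fin n) : prevCoord a x j.succ = x j.castSucc := by
  simp [prevCoord]
  rfl

@[simp]
theorem prevCoord_cons_succ (y : Fin n → ℝ) (j : Fin n) :
    prevCoord a (Fin.cons t y) j.succ = prevCoord t y j := by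
  cases n with
  | zero => exact j.elim0
  | succ n =>
    cases j using Fin.cases with
    | zero => rw [prevCoord_succ, prevCoord_zero, Fin.castSucc_zero, Fin.cons_zero]
    | succ k => rw [prevCoord_succ, prevCoord_succ, ← Fin.succ_castSucc, Fin.cons_succ]

theorem measurable_prevCoord (j : Fin n) : Measurable fun x : Fin n → ℝ => prevCoord a x j := by
  unfold prevCoord
  split_ifs
  · exact measurable_pi_apply _
  · exact measurable_const

end prevCoord

def openSimplex {n : ℕ} (a b : ℝ) : Set (Fin n → ℝ) :=
  {x | (∀ i, prevCoord a x i < x i) ∧ ∀ i, x i < b}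

section openSimplex

variable {n : ℕ} {a b : ℝ}

theorem measurableSet_openSimplex : MeasurableSet (openSimplex a b : Set (Fin n → ℝ)) := by
  simp only [openSimplex, Set.ofPred_and, Set.ofPred_forall]
  exact (MeasurableSet.iInter fun i => measurableSet_lt (measurable_prevCoord a i)
    (measurable_pi_apply i)).inter (MeasurableSet.iInter fun i => measurableSet_lt
      (measurable_pi_apply i) measurable_const)

theorem cons_mem_openSimplex_iff {t : ℝ} {y : Fin n → ℝ} :
    (Fin.cons t y : Fin (n + 1) → ℝ) ∈ openSimplex a b ↔
      t ∈ Set.Ioo a b ∧ y ∈ openSimplex t b := by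
  simp only [openSimplex, Set.mem_ofPred_eq, Fin.forall_fin_succ, prevCoord_zero,
    prevCoord_cons_succ, Fin.cons_zero, Fin.cons_succ, Set.mem_Ioo]
  tauto

theorem mem_openSimplex_iff_strictMono {x : Fin (n + 1) → ℝ} :
    x ∈ openSimplex a b ↔ StrictMono x ∧ a < x 0 ∧ x (Fin.last n) < b := by
  simp only [openSimplex, Set.mem_ofPred_eq,
    Fin.forall_fin_succ (P := fun i => prevCoord a x i < x i), prevCoord_zero, prevCoord_succ,
    ← Fin.strictMono_iff_lt_succ]
  constructor
  · rintro ⟨⟨h0, hmono⟩, hb⟩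
    exact ⟨hmono, h0, hb _⟩
  · rintro ⟨hmono, h0, hb⟩
    exact ⟨⟨h0, hmono⟩, fun i => (hmono.monotone (Fin.le_last i)).trans_lt hb⟩

end openSimplex

theorem prod_cons_sub_prevCoord_rpow {n : ℕ} (a t : ℝ) (y : Fin n → ℝ) (α : Fin (n + 1) → ℝ) :
    ∏ j, ((Fin.cons t y : Fin (n + 1) → ℝ) j - prevCoord a (Fin.cons t y) j) ^ (α j - 1) =
      (t - a) ^ (α 0 - 1) * ∏ j, (y j - prevCoord t y j) ^ (α j.succ - 1) := by
  simp only [Fin.prod_univ_succ, Fin.cons_zero, prevCoord_zero, Fin.cons_succ, prevCoord_cons_succ]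

theorem measurable_prod_sub_prevCoord_rpow {n : ℕ} (a : ℝ) (α : Fin n → ℝ) :
    Measurable fun x : Fin n → ℝ => ∏ j, (x j - prevCoord a x j) ^ (α j - 1) :=
  Finset.measurable_prod _ fun j _ =>
    ((measurable_pi_apply j).sub (measurable_prevCoord a j)).pow_const _

theorem setLIntegral_openSimplex_succ {n : ℕ} {a b : ℝ} {f : (Fin (n + 1) → ℝ) → ℝ≥0∞}
    (hf : Measurable f) :
    ∫⁻ x in openSimplex a b, f x =
      ∫⁻ t in Set.Ioo a b, ∫⁻ y in openSimplex t b, f (Fin.cons t y) := by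
  rw [← lintegral_indicator measurableSet_openSimplex,
    lintegral_fin_succ_eq_lintegral_cons (hf.indicator measurableSet_openSimplex),
    ← lintegral_indicator measurableSet_Ioo]
  congr 1 with t
  by_cases ht : t ∈ Set.Ioo a b
  · rw [Set.indicator_of_mem ht, ← lintegral_indicator measurableSet_openSimplex]
    congr 1 with y
    by_cases hy : y ∈ openSimplex t b
    · rw [Set.indicator_of_mem (cons_mem_openSimplex_iff.mpr ⟨ht, hy⟩), Set.indicator_of_mem hy]
    · rw [Set.indicator_of_notMem (fun h => hy (cons_mem_openSimplex_iff.mp h).2),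
        Set.indicator_of_notMem hy]
  · have hy : ∀ y, (Fin.cons t y : Fin (n + 1) → ℝ) ∉ openSimplex a b :=
      fun y h => ht (cons_mem_openSimplex_iff.mp h).1
    simp only [Set.indicator_of_notMem ht, Set.indicator_of_notMem (hy _), lintegral_zero]

theorem lintegral_openSimplex_prod_sub_prevCoord_rpow {n : ℕ} {α : Fin n → ℝ} (hα : ∀ j, 0 < α j)
    {a b : ℝ} (hab : a < b) :
    ∫⁻ x in openSimplex a b, ENNReal.ofReal (∏ j, (x j - prevCoord a x j) ^ (α j - 1)) =
      ENNReal.ofReal ((b - a) ^ (∑ j, α j) * (∏ j, Gamma (α j)) / Gamma (∑ j, α j + 1)) := by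
  induction n generalizing a with
  | zero =>
    have huniv : (openSimplex a b : Set (Fin 0 → ℝ)) = Set.univ := by
      ext x; simp [openSimplex]
    simp [huniv, volume_pi]
  | succ n ih =>
    set A := ∑ j : Fin n, α j.succ
    have hA : 0 ≤ A := Finset.sum_nonneg fun j _ => (hα _).le
    have hC : 0 ≤ (∏ j : Fin n, Gamma (α j.succ)) / Gamma (A + 1) :=
      div_nonneg (Finset.prod_nonneg fun j _ => (Gamma_pos_of_pos (hα _)).le)
        (Gamma_pos_of_pos (by positivity)).le
    calc ∫⁻ x in openSimplex a b, ENNReal.ofReal (∏ j, (x j - prevCoord a x j) ^ (α j - 1))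
        = ∫⁻ t in Set.Ioo a b, ENNReal.ofReal ((t - a) ^ (α 0 - 1)) *
            ∫⁻ y in openSimplex t b, ENNReal.ofReal
              (∏ j, (y j - prevCoord t y j) ^ (α j.succ - 1)) := by
          rw [setLIntegral_openSimplex_succ (measurable_prod_sub_prevCoord_rpow a α).ennreal_ofReal]
          refine setLIntegral_congr_fun measurableSet_Ioo fun t ht => ?_
          simp only [prod_cons_sub_prevCoord_rpow,
            ENNReal.ofReal_mul (rpow_nonneg (sub_nonneg.mpr ht.1.le) _)]
          exact lintegral_const_mul' _ _ ENNReal.ofReal_ne_top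
      _ = ∫⁻ t in Set.Ioo a b, ENNReal.ofReal ((t - a) ^ (α 0 - 1) * (b - t) ^ (A + 1 - 1)) *
            ENNReal.ofReal ((∏ j : Fin n, Gamma (α j.succ)) / Gamma (A + 1)) := by
          refine setLIntegral_congr_fun measurableSet_Ioo fun t ht => ?_
          rw [ih (fun j => hα j.succ) ht.2, add_sub_cancel_right, mul_div_assoc,
            ENNReal.ofReal_mul (rpow_nonneg (sub_nonneg.mpr ht.2.le) _), ← mul_assoc,
            ← ENNReal.ofReal_mul (rpow_nonneg (sub_nonneg.mpr ht.1.le) _)]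
      _ = ENNReal.ofReal ((b - a) ^ (α 0 + (A + 1) - 1) * ProbabilityTheory.beta (α 0) (A + 1)) *
            ENNReal.ofReal ((∏ j : Fin n, Gamma (α j.succ)) / Gamma (A + 1)) := by
          rw [lintegral_mul_const' _ _ ENNReal.ofReal_ne_top,
            lintegral_Ioo_sub_rpow_mul_sub_rpow (hα 0) (by positivity) hab]
      _ = _ := by
          rw [← ENNReal.ofReal_mul (mul_nonneg (rpow_nonneg (sub_nonneg.mpr hab.le) _)
            (ProbabilityTheory.beta_pos (hα 0) (by positivity)).le)]
          congr 1
          have hΓ : Gamma (A + 1) ≠ 0 := (Gamma_pos_of_pos (by positivity)).ne'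
          rw [Fin.sum_univ_succ, Fin.prod_univ_succ, ProbabilityTheory.beta,
            show α 0 + (A + 1) - 1 = α 0 + A by ring, ← add_assoc]
          field_simp
          ring

theorem integral_openSimplex_prod_sub_prevCoord_rpow {n : ℕ} {α : Fin n → ℝ} (hα : ∀ j, 0 < α j)
    {a b : ℝ} (hab : a < b) :
    ∫ x in openSimplex a b, ∏ j, (x j - prevCoord a x j) ^ (α j - 1) =
      (b - a) ^ (∑ j, α j) * (∏ j, Gamma (α j)) / Gamma (∑ j, α j + 1) := by
  have hsum : 0 ≤ ∑ j, α j := Finset.sum_nonneg fun j _ => (hα j).le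
  rw [integral_eq_lintegral_of_nonneg_ae _
      (measurable_prod_sub_prevCoord_rpow a α).aestronglyMeasurable,
    lintegral_openSimplex_prod_sub_prevCoord_rpow hα hab, ENNReal.toReal_ofReal]
  · exact div_nonneg (mul_nonneg (rpow_nonneg (sub_nonneg.mpr hab.le) _)
      (Finset.prod_nonneg fun j _ => (Gamma_pos_of_pos (hα j)).le))
      (Gamma_pos_of_pos (by positivity)).le
  · filter_upwards [ae_restrict_mem measurableSet_openSimplex] with x hx
    exact Finset.prod_nonneg fun j _ => rpow_nonneg (sub_nonneg.mpr (hx.1 j).le) _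

theorem stmt_3 (m : ℕ) (hm : 0 < m) (α : Fin m → ℝ) (hα : ∀ j, 0 < α j)
    (a b : ℝ) (hab : a < b) :
    (∫ x in {x : Fin m → ℝ | StrictMono x ∧ a < x ⟨0, hm⟩ ∧
        x ⟨m - 1, Nat.sub_lt hm one_pos⟩ < b},
      ∏ j : Fin m, (x j - prevCoord a x j) ^ (α j - 1)) =
    (b - a) ^ (∑ j, α j) * (∏ j, Real.Gamma (α j)) / Real.Gamma ((∑ j, α j) + 1) := by
  obtain ⟨n, rfl⟩ : ∃ n, m = n + 1 := ⟨m - 1, by omega⟩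
  have hsimplex : {x : Fin (n + 1) → ℝ | StrictMono x ∧ a < x ⟨0, hm⟩ ∧
      x ⟨n + 1 - 1, Nat.sub_lt hm one_pos⟩ < b} = openSimplex a b := by
    ext x
    exact mem_openSimplex_iff_strictMono.symm
  rw [hsimplex, integral_openSimplex_prod_sub_prevCoord_rpow hα hab]
end

section
/- Let S_m be defined for m ≥ 1 by S_m = ∑_σ ∏_{i=1}^m (N_i(σ))!, where the sum is over all functions σ : {1,…,m} → {1,…,m} satisfying σ(j) ≤ j for all j, and N_i(σ) = #{j : σ(j) = i}. Then S_m = (2m - 1)!! (the double factorial of odd numbers), and in particular S_m ≤ 2^m · m!. -/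
open Finset Nat

/-!
Deleting the last point of a subdiagonal map `σ` on `{1, …, m + 1}` leaves a subdiagonal map `τ`
on `{1, …, m}`, and `σ (m + 1)` is free. Sending `m + 1` to `i ≤ m` raises `N_i` by one and so
multiplies `∏ N_i!` by `N_i(τ) + 1`, while sending it to `m + 1` changes nothing. Summing over
the choices gives the factor `∑ (N_i(τ) + 1) + 1 = 2m + 1`, hence `S_{m+1} = (2m + 1) S_m`.
The bound is `(2m - 1)‼ ≤ (2m)‼ = 2^m m!`.
-/

def fiberFactorialProd {α β : Type*} [Fintype α] [Fintype β] [DecidableEq β] (f : α → β) :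
    ℕ :=
  ∏ b, (#{a | f a = b})!

def subdiagonalMaps (n : ℕ) : Finset (Fin n → Fin n) :=
  {σ | ∀ j, σ j ≤ j}

theorem card_filter_snoc_eq {β : Type*} [DecidableEq β] {n : ℕ} (f : Fin n → β) (b c : β) :
    #{j | (Fin.snoc f b : Fin (n + 1) → β) j = c} = #{j | f j = c} + if b = c then 1 else 0 := by
  simp only [card_filter, Fin.sum_univ_castSucc, Fin.snoc_castSucc, Fin.snoc_last]

section FiberFactorialProd

variable {α β γ : Type*} [Fintype α] [Fintype β] [Fintype γ] [DecidableEq β] [DecidableEq γ]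

theorem fiberFactorialProd_comp_of_injective {e : β → γ} (he : Function.Injective e)
    (f : α → β) :
    fiberFactorialProd (e ∘ f) = fiberFactorialProd f := by
  refine (Fintype.prod_of_injective e he _ _ (fun c hc => ?_) (fun b => ?_)).symm
  · have : ∀ a, e (f a) ≠ c := fun a h => hc ⟨f a, h⟩
    simp [this]
  · simp [he.eq_iff]

theorem fiberFactorialProd_snoc {n : ℕ} (f : Fin n → β) (b : β) :
    fiberFactorialProd (Fin.snoc f b : Fin (n + 1) → β) =
      (#{j | f j = b} + 1) * fiberFactorialProd f := by
  have hfactor : ∀ c, (#{j | f j = c} + if b = c then 1 else 0)! =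
      (if b = c then #{j | f j = c} + 1 else 1) * (#{j | f j = c})! := by
    intro c
    split_ifs <;> simp [factorial_succ]
  simp only [fiberFactorialProd, card_filter_snoc_eq, hfactor, prod_mul_distrib, prod_ite_eq,
    mem_univ, if_true]

theorem sum_fiberFactorialProd_snoc {n : ℕ} (f : Fin n → β) :
    ∑ b, fiberFactorialProd (Fin.snoc f b : Fin (n + 1) → β) =
      (n + Fintype.card β) * fiberFactorialProd f := by
  have hfibers : ∑ b, #{j | f j = b} = n := by
    simpa using (card_eq_sum_card_fiberwise (f := f) (s := univ) (t := univ) (by simp)).symm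
  simp only [fiberFactorialProd_snoc, ← sum_mul, sum_add_distrib, hfibers, sum_const,
    smul_eq_mul, mul_one, Fintype.card]

end FiberFactorialProd

theorem sum_subdiagonalMaps_succ {M : Type*} [AddCommMonoid M] (n : ℕ)
    (g : (Fin (n + 1) → Fin (n + 1)) → M) :
    ∑ σ ∈ subdiagonalMaps (n + 1), g σ =
      ∑ τ ∈ subdiagonalMaps n, ∑ i, g (Fin.snoc (Fin.castSucc ∘ τ) i) := by
  rw [← sum_product']
  refine (sum_bij (fun p _ => Fin.snoc (Fin.castSucc ∘ p.1) p.2) ?_ ?_ ?_ (fun _ _ => rfl)).symm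
  · rintro ⟨τ, i⟩ hτ
    simp only [subdiagonalMaps, mem_product, mem_filter, mem_univ, true_and] at hτ ⊢
    intro j
    induction j using Fin.lastCases with
    | last => exact Fin.le_last _
    | cast j => simpa [Fin.snoc_castSucc] using hτ.1 j
  · rintro ⟨τ, i⟩ - ⟨τ', i'⟩ - h
    obtain ⟨hτ, hi⟩ := Fin.snoc_injective2 h
    exact Prod.ext ((Fin.castSucc_injective n).comp_left hτ) hi
  · intro σ hσ
    simp only [subdiagonalMaps, mem_filter, mem_univ, true_and] at hσ
    have hlt : ∀ j : Fin n, (σ j.castSucc : ℕ) < n := fun j =>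
      lt_of_le_of_lt (hσ j.castSucc) j.isLt
    refine ⟨(fun j => (σ j.castSucc).castLT (hlt j), σ (Fin.last n)), ?_, ?_⟩
    · simp only [subdiagonalMaps, mem_product, mem_filter, mem_univ, true_and, and_true]
      exact fun j => hσ j.castSucc
    · conv_rhs => rw [← Fin.snoc_init_self σ]
      rfl

theorem sum_subdiagonalMaps_fiberFactorialProd_succ (n : ℕ) :
    ∑ σ ∈ subdiagonalMaps (n + 1), fiberFactorialProd σ =
      (2 * n + 1) * ∑ τ ∈ subdiagonalMaps n, fiberFactorialProd τ := by
  rw [sum_subdiagonalMaps_succ, mul_sum]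
  refine sum_congr rfl fun τ _ => ?_
  rw [sum_fiberFactorialProd_snoc, Fintype.card_fin,
    fiberFactorialProd_comp_of_injective (Fin.castSucc_injective n)]
  ring

theorem sum_subdiagonalMaps_fiberFactorialProd (n : ℕ) :
    ∑ σ ∈ subdiagonalMaps n, fiberFactorialProd σ = (2 * n - 1)‼ := by
  induction n with
  | zero => rfl
  | succ n ih =>
    rw [sum_subdiagonalMaps_fiberFactorialProd_succ, ih,
      show 2 * (n + 1) - 1 = 2 * n + 1 by omega, doubleFactorial_add_one]

theorem doubleFactorial_le_doubleFactorial_succ : ∀ n : ℕ, n‼ ≤ (n + 1)‼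
  | 0 => le_rfl
  | 1 => by decide
  | n + 2 => by
    rw [doubleFactorial_add_two, doubleFactorial_add_two (n + 1)]
    exact Nat.mul_le_mul (by omega) (doubleFactorial_le_doubleFactorial_succ n)

theorem doubleFactorial_two_mul_sub_one_le (n : ℕ) : (2 * n - 1)‼ ≤ 2 ^ n * n ! := by
  rw [← doubleFactorial_two_mul]
  rcases n with _ | n
  · rfl
  · simpa [show 2 * (n + 1) = 2 * n + 1 + 1 by ring] using
      doubleFactorial_le_doubleFactorial_succ (2 * n + 1)

theorem stmt_4_general (m : ℕ) :
    (∑ σ ∈ Finset.univ.filter (fun σ : Fin m → Fin m => ∀ j, σ j ≤ j),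
        ∏ i : Fin m, (Finset.univ.filter (fun j => σ j = i)).card !) =
      Nat.doubleFactorial (2 * m - 1) ∧
    (∑ σ ∈ Finset.univ.filter (fun σ : Fin m → Fin m => ∀ j, σ j ≤ j),
        ∏ i : Fin m, (Finset.univ.filter (fun j => σ j = i)).card !) ≤ 2 ^ m * m ! := by
  have h := sum_subdiagonalMaps_fiberFactorialProd m
  exact ⟨h, h ▸ doubleFactorial_two_mul_sub_one_le m⟩

theorem stmt_4 (m : ℕ) (hm : 1 ≤ m) :
    (∑ σ ∈ Finset.univ.filter (fun σ : Fin m → Fin m => ∀ j, σ j ≤ j),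
        ∏ i : Fin m, (Finset.univ.filter (fun j => σ j = i)).card !) =
      Nat.doubleFactorial (2 * m - 1) ∧
    (∑ σ ∈ Finset.univ.filter (fun σ : Fin m → Fin m => ∀ j, σ j ≤ j),
        ∏ i : Fin m, (Finset.univ.filter (fun j => σ j = i)).card !) ≤ 2 ^ m * m ! :=
  stmt_4_general m
end
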